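/- arXiv:2407.20403 — 4 statements merged into one kernel-verified Lean document; each statement's English description precedes it below -/
import Mathlib

section
/- Fix x with 0 < x < r and f analytic on D_r. The function α ↦ Σ_{n=0}^∞ f_n x^n/(n+α) (the Hadamard finite part of ∫₀ˣ t^{α-1} f(t) dt with the factor x^α removed) is meromorphic in α on ℂ with at most simple poles at α = 0, -1, -2, ..., the pole at α = -k having residue f_k. -/
/-!
For `x > 0` we have `x ^ (n + β) = x ^ n * x ^ β`, so the series is `x ^ β * ∑ aₙ / (n + β)` with
`aₙ = cₙ xⁿ`, and `∑ ‖aₙ‖ < ∞` because `x` lies inside the disc of convergence. Near any `α ∉ -ℕ`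
the terms `aₙ / (n + β)` are bounded by `‖aₙ‖ / δ`, so the sum is holomorphic there. Near `-k`,
dropping the `k`-th term leaves a series of the same kind that is holomorphic at `-k`, while
`(β + k) * a_k / (k + β) = a_k`; the residue is therefore `a_k * x ^ (-k) = c_k`.
-/

open Complex Filter Topology

lemma summable_norm_mul_pow_of_norm_lt {c : ℕ → ℂ} {w z : ℂ}
    (hs : Summable fun n => c n * w ^ n) (hz : ‖z‖ < ‖w‖) :
    Summable fun n => ‖c n * z ^ n‖ := by
  have hw : 0 < ‖w‖ := (norm_nonneg z).trans_lt hz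
  obtain ⟨C, hC⟩ := hs.tendsto_atTop_zero.norm.bddAbove_range
  refine .of_nonneg_of_le (fun n => norm_nonneg _) (fun n => ?_)
    ((summable_geometric_of_lt_one (by positivity) ((div_lt_one hw).mpr hz)).mul_left C)
  calc ‖c n * z ^ n‖ = ‖c n * w ^ n‖ * (‖z‖ / ‖w‖) ^ n := by
        rw [norm_mul, norm_mul, norm_pow, norm_pow, div_pow]
        field_simp
    _ ≤ C * (‖z‖ / ‖w‖) ^ n := by gcongr; exact hC ⟨n, rfl⟩

lemma tendsto_norm_natCast_add_atTop (α : ℂ) :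
    Tendsto (fun n : ℕ => ‖(n : ℂ) + α‖) atTop atTop := by
  refine tendsto_atTop_mono (fun n => ?_)
    (tendsto_atTop_add_const_right _ (-‖α‖) tendsto_natCast_atTop_atTop)
  simpa using norm_sub_norm_le (n : ℂ) (-α)

lemma exists_pos_le_norm_natCast_add (α : ℂ) :
    ∃ δ > 0, ∀ n : ℕ, (n : ℂ) + α ≠ 0 → δ ≤ ‖(n : ℂ) + α‖ := by
  rcases Set.eq_empty_or_nonempty {n : ℕ | (n : ℂ) + α ≠ 0} with hs | hs
  · exact ⟨1, one_pos, fun n hn => absurd hn (Set.eq_empty_iff_forall_notMem.mp hs n)⟩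
  obtain ⟨n₀, hn₀, hmin⟩ := (Nat.cofinite_eq_atTop ▸ tendsto_norm_natCast_add_atTop α
    ).exists_within_forall_le hs
  exact ⟨_, norm_pos_iff.mpr hn₀, hmin⟩

section

variable {a : ℕ → ℂ}

lemma summable_div_natCast_add (ha : Summable fun n => ‖a n‖) (β : ℂ) :
    Summable fun n : ℕ => a n / (n + β) := by
  refine .of_norm_bounded_eventually_nat ha ?_
  filter_upwards [(tendsto_norm_natCast_add_atTop β).eventually_ge_atTop 1] with n hn
  rw [norm_div]
  exact div_le_self (norm_nonneg _) hn

lemma differentiableOn_tsum_div_natCast_add (ha : Summable fun n => ‖a n‖) {U : Set ℂ}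
    (hU : IsOpen U) {δ : ℝ} (hδ : 0 < δ)
    (hU_δ : ∀ β ∈ U, ∀ n : ℕ, a n ≠ 0 → δ ≤ ‖(n : ℂ) + β‖) :
    DifferentiableOn ℂ (fun β => ∑' n : ℕ, a n / (n + β)) U := by
  refine differentiableOn_tsum_of_summable_norm (ha.div_const δ) (fun n β hβ => ?_) hU
    (fun n β hβ => ?_)
  · by_cases h : a n = 0
    · simp [h, differentiableWithinAt_const]
    · have hne : (n : ℂ) + β ≠ 0 := norm_pos_iff.mp (hδ.trans_le (hU_δ β hβ n h))
      exact ((differentiableAt_const _).div (differentiableAt_id.const_add _)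
        hne).differentiableWithinAt
  · by_cases h : a n = 0
    · simp [h]
    · rw [norm_div]
      exact div_le_div_of_nonneg_left (norm_nonneg _) hδ (hU_δ β hβ n h)

lemma analyticAt_tsum_div_natCast_add (ha : Summable fun n => ‖a n‖) {α : ℂ}
    (hα : ∀ n : ℕ, a n ≠ 0 → (n : ℂ) + α ≠ 0) :
    AnalyticAt ℂ (fun β => ∑' n : ℕ, a n / (n + β)) α := by
  obtain ⟨δ, hδ, hδ_le⟩ := exists_pos_le_norm_natCast_add α
  have hball : ∀ β ∈ Metric.ball α (δ / 2), ∀ n : ℕ, a n ≠ 0 → δ / 2 ≤ ‖(n : ℂ) + β‖ := by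
    intro β hβ n hn
    rw [Metric.mem_ball, dist_eq_norm] at hβ
    have htriangle : ‖(n : ℂ) + α‖ ≤ ‖(n : ℂ) + β‖ + ‖β - α‖ :=
      calc ‖(n : ℂ) + α‖ = ‖((n : ℂ) + β) - (β - α)‖ := by ring_nf
        _ ≤ _ := norm_sub_le _ _
    linarith [hδ_le n (hα n hn)]
  exact (differentiableOn_tsum_div_natCast_add ha Metric.isOpen_ball (half_pos hδ)
    hball).analyticAt (Metric.ball_mem_nhds α (half_pos hδ))

lemma tendsto_mul_tsum_div_natCast_add (ha : Summable fun n => ‖a n‖) (k : ℕ) :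
    Tendsto (fun β => (β + k) * ∑' n : ℕ, a n / (n + β)) (𝓝[≠] (-(k : ℂ))) (𝓝 (a k)) := by
  set a' := Function.update a k 0
  have ha' : Summable fun n => ‖a' n‖ := by
    refine .of_nonneg_of_le (fun n => norm_nonneg _) (fun n => ?_) ha
    by_cases h : n = k <;> simp [a', h]
  have hsplit : ∀ β ≠ -(k : ℂ),
      (β + k) * ∑' n : ℕ, a n / (n + β) = a k + (β + k) * ∑' n : ℕ, a' n / (n + β) := by
    intro β hβ
    have hkβ : (k : ℂ) + β ≠ 0 := fun h => hβ (by linear_combination h)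
    rw [(summable_div_natCast_add ha β).tsum_eq_add_tsum_ite k, mul_add]
    congr 1
    · field_simp
      ring
    · congr 1
      refine tsum_congr fun n => ?_
      by_cases h : n = k <;> simp [a', h]
  have hG : ContinuousAt (fun β => ∑' n : ℕ, a' n / (n + β)) (-(k : ℂ)) := by
    refine (analyticAt_tsum_div_natCast_add ha' fun n hn => ?_).continuousAt
    have hnk : n ≠ k := fun h => hn (by simp [a', h])
    rw [← sub_eq_add_neg, sub_ne_zero]
    exact_mod_cast hnk
  have hcont : ContinuousAt (fun β : ℂ => a k + (β + k) * ∑' n : ℕ, a' n / (n + β)) (-(k : ℂ)) :=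
    continuousAt_const.add ((continuousAt_id.add continuousAt_const).mul hG)
  have hlim := hcont.tendsto.mono_left (nhdsWithin_le_nhds (s := {-(k : ℂ)}ᶜ))
  simp only [neg_add_cancel, zero_mul, add_zero] at hlim
  exact hlim.congr' (eventually_nhdsWithin_of_forall fun β hβ => (hsplit β hβ).symm)

end

theorem hadamard_finite_part_meromorphic_general (r x : ℝ) (hx : 0 < x) (hxr : x < r)
    (f : ℂ → ℂ) (c : ℕ → ℂ)
    (hc : ∀ z ∈ Metric.ball (0 : ℂ) r, HasSum (fun n : ℕ => c n * z ^ n) (f z)) :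
    (∀ α : ℂ, (∀ n : ℕ, α ≠ -(n : ℂ)) →
        AnalyticAt ℂ
          (fun β : ℂ => ∑' n : ℕ, c n * (x : ℂ) ^ ((n : ℂ) + β) / ((n : ℂ) + β)) α) ∧
      (∀ k : ℕ,
        Tendsto
          (fun β : ℂ =>
            (β + (k : ℂ)) * ∑' n : ℕ, c n * (x : ℂ) ^ ((n : ℂ) + β) / ((n : ℂ) + β))
          (nhdsWithin (-(k : ℂ)) {(-(k : ℂ))}ᶜ) (nhds (c k))) := by
  have hx0 : (x : ℂ) ≠ 0 := ofReal_ne_zero.mpr hx.ne'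
  have hρ : (((x + r) / 2 : ℝ) : ℂ) ∈ Metric.ball (0 : ℂ) r := by
    rw [mem_ball_zero_iff, norm_real, Real.norm_of_nonneg (by linarith)]
    linarith
  have ha : Summable fun n => ‖c n * (x : ℂ) ^ n‖ :=
    summable_norm_mul_pow_of_norm_lt (hc _ hρ).summable (by
      rw [norm_real, norm_real, Real.norm_of_nonneg hx.le, Real.norm_of_nonneg (by linarith)]
      linarith)
  have hfactor : ∀ β : ℂ, ∑' n : ℕ, c n * (x : ℂ) ^ ((n : ℂ) + β) / ((n : ℂ) + β) =
      (∑' n : ℕ, c n * (x : ℂ) ^ n / (n + β)) * (x : ℂ) ^ β := by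
    intro β
    rw [← tsum_mul_right]
    refine tsum_congr fun n => ?_
    rw [cpow_add _ _ hx0, cpow_natCast]
    ring
  have hpow : ∀ β, AnalyticAt ℂ (fun β : ℂ => (x : ℂ) ^ β) β := fun β =>
    analyticAt_const.cpow analyticAt_id (ofReal_mem_slitPlane.mpr hx)
  simp only [hfactor]
  refine ⟨fun α hα => ?_, fun k => ?_⟩
  · refine (analyticAt_tsum_div_natCast_add ha fun n _ h => hα n ?_).mul (hpow α)
    linear_combination h
  · have hres : c k * (x : ℂ) ^ k * (x : ℂ) ^ (-(k : ℂ)) = c k := by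
      rw [cpow_neg, cpow_natCast, mul_inv_cancel_right₀ (pow_ne_zero k hx0)]
    rw [← hres]
    simpa only [mul_assoc] using (tendsto_mul_tsum_div_natCast_add ha k).mul
      ((hpow _).continuousAt.tendsto.mono_left nhdsWithin_le_nhds)

/-- For fixed `0 < x < r` and `f` analytic on `D_r` with Maclaurin coefficients `c n`,
the Hadamard finite part `α ↦ Σ c n * x^{n+α} / (n+α)` of `∫₀ˣ t^{α-1} f(t) dt` is
meromorphic in `α`: analytic away from `α = 0, -1, -2, ...`, with at most simple poles
there, the pole at `α = -k` having residue `c k`. -/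
theorem hadamard_finite_part_meromorphic (r x : ℝ) (hx : 0 < x) (hxr : x < r)
    (f : ℂ → ℂ) (c : ℕ → ℂ)
    (hf : AnalyticOnNhd ℂ f (Metric.ball (0 : ℂ) r))
    (hc : ∀ z ∈ Metric.ball (0 : ℂ) r, HasSum (fun n : ℕ => c n * z ^ n) (f z)) :
    (∀ α : ℂ, (∀ n : ℕ, α ≠ -(n : ℂ)) →
        AnalyticAt ℂ
          (fun β : ℂ => ∑' n : ℕ, c n * (x : ℂ) ^ ((n : ℂ) + β) / ((n : ℂ) + β)) α) ∧
      (∀ k : ℕ,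
        Tendsto
          (fun β : ℂ =>
            (β + (k : ℂ)) * ∑' n : ℕ, c n * (x : ℂ) ^ ((n : ℂ) + β) / ((n : ℂ) + β))
          (nhdsWithin (-(k : ℂ)) {(-(k : ℂ))}ᶜ) (nhds (c k))) :=
  hadamard_finite_part_meromorphic_general r x hx hxr f c hc
end

section
/- Let φ be analytic on [0,∞) such that ∫_R^∞ p^{Re α - 1}|φ(p)| dp converges for every R > 0 and every α ∈ ℂ. Then for each k = 0,1,2,..., one has lim_{ε→0} ε · FP∫₀^∞ p^{-k-1+ε} φ(p) dp = φ^{(k)}(0)/k!, where FP denotes the Hadamard finite part of the integral near 0 (the integral from R to ∞ being an ordinary convergent integral). -/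
open Complex Filter MeasureTheory

/-!
Multiplied by `ε`, the `n = k` pole term `a_k R^ε / ε` of the finite part becomes `a_k R^ε → a_k`.
Everything else stays bounded as `ε → 0`: the terms `R^(n-k+ε)/(n-k+ε)` with `n < k` are continuous
at `ε = 0`, and for `|ε| ≤ δ` both integrals are dominated by `(p^(-δ) + p^δ)` times an integrable
function, so `ε` times them tends to `0`. Finally `a_k = φ^(k)(0)/k!`, because a one-sided expansion
`φ(p) = Σ a_n p^n + O(p^(k+1))` as `p → 0⁺` already determines the Taylor coefficients of `φ`.
-/

open Set Asymptotics Topology Finset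

theorem Real.rpow_le_rpow_add_rpow_of_mem_Icc {p a b t : ℝ} (hp : 0 < p) (ht : t ∈ Icc a b) :
    p ^ t ≤ p ^ a + p ^ b := by
  rcases le_total p 1 with hp1 | hp1
  · linarith [Real.rpow_le_rpow_of_exponent_ge hp hp1 ht.1, Real.rpow_nonneg hp.le b]
  · linarith [Real.rpow_le_rpow_of_exponent_le hp1 ht.2, Real.rpow_nonneg hp.le a]

theorem isBigO_one_setIntegral_rpow_add_smul {s : Set ℝ} (hs : s ⊆ Ioi 0) (hms : MeasurableSet s)
    {E : Type*} [NormedAddCommGroup E] [NormedSpace ℝ E] {f : ℝ → E} {β δ : ℝ} (hδ : 0 < δ)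
    (hlo : IntegrableOn (fun p => p ^ (β - δ) * ‖f p‖) s)
    (hhi : IntegrableOn (fun p => p ^ (β + δ) * ‖f p‖) s) :
    (fun ε : ℝ => ∫ p in s, p ^ (β + ε) • f p) =O[𝓝 0] (fun _ => (1 : ℝ)) := by
  refine (isBigO_one_iff ℝ).2 <| isBoundedUnder_of_eventually_le
    (a := ∫ p in s, p ^ (β - δ) * ‖f p‖ + p ^ (β + δ) * ‖f p‖) ?_
  filter_upwards [Icc_mem_nhds (neg_lt_zero.2 hδ) hδ] with ε hε
  refine (norm_integral_le_integral_norm _).trans <|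
    integral_mono_of_nonneg (.of_forall fun _ => norm_nonneg _) (hlo.add hhi) ?_
  filter_upwards [ae_restrict_mem hms] with p hp
  have hp0 : 0 < p := hs hp
  rw [norm_smul, Real.norm_of_nonneg (Real.rpow_nonneg hp0.le _), ← add_mul]
  gcongr
  exact Real.rpow_le_rpow_add_rpow_of_mem_Icc hp0 ⟨by linarith [hε.1], by linarith [hε.2]⟩

theorem isBigO_one_intervalIntegral_rpow_smul {E : Type*} [NormedAddCommGroup E]
    [NormedSpace ℝ E] {ψ : ℝ → E} {R : ℝ} (hR : 0 ≤ R) (hψ : ContinuousOn ψ (Icc 0 R)) :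
    (fun ε : ℝ => ∫ p in (0 : ℝ)..R, p ^ ε • ψ p) =O[𝓝 0] (fun _ => (1 : ℝ)) := by
  have hint : ∀ r : ℝ, -1 < r → IntegrableOn (fun p => p ^ r * ‖ψ p‖) (Ioc 0 R) := fun r hr =>
    ((intervalIntegrable_iff_integrableOn_Ioc_of_le hR).1
      (intervalIntegral.intervalIntegrable_rpow' hr)).mul_continuousOn_of_subset
      hψ.norm measurableSet_Ioc isCompact_Icc Ioc_subset_Icc_self
  simpa only [intervalIntegral.integral_of_le hR, zero_add] using
    isBigO_one_setIntegral_rpow_add_smul (β := 0) (fun _ hp => hp.1) measurableSet_Ioc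
      one_half_pos (hint _ (by norm_num)) (hint _ (by norm_num))

theorem isBigO_one_setIntegral_Ioi_rpow_add_smul {E : Type*} [NormedAddCommGroup E]
    [NormedSpace ℝ E] {φ : ℝ → E} {R : ℝ} (hR : 0 < R)
    (hφ : ∀ α : ℝ, IntegrableOn (fun p : ℝ => p ^ (α - 1) * ‖φ p‖) (Ioi R)) (β : ℝ) :
    (fun ε : ℝ => ∫ p in Ioi R, p ^ (β + ε) • φ p) =O[𝓝 0] (fun _ => (1 : ℝ)) :=
  isBigO_one_setIntegral_rpow_add_smul (s := Ioi R) (fun _ hp => hR.trans hp) measurableSet_Ioi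
    one_pos    (by simpa only [add_sub_cancel_right] using hφ (β - 1 + 1))
    (by simpa only [add_sub_cancel_right] using hφ (β + 1 + 1))

theorem HasFPowerSeriesAt.iteratedDeriv_eq_factorial_smul_coeff {𝕜 E : Type*}
    [NontriviallyNormedField 𝕜] [NormedAddCommGroup E] [NormedSpace 𝕜 E] [CompleteSpace E]
    {f : 𝕜 → E} {p : FormalMultilinearSeries 𝕜 𝕜 E} {x : 𝕜} (hf : HasFPowerSeriesAt f p x)
    (n : ℕ) : iteratedDeriv n f x = n.factorial • p.coeff n := by
  obtain ⟨r, hr⟩ := hf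
  rw [iteratedDeriv_eq_iteratedFDeriv, ← hr.factorial_smul 1 n,
    FormalMultilinearSeries.apply_eq_pow_smul_coeff, one_pow, one_smul]

theorem eq_zero_of_sum_pow_smul_isBigO {𝕜 E : Type*} [NormedField 𝕜] [NormedAddCommGroup E]
    [NormedSpace 𝕜 E] {l : Filter 𝕜} [l.NeBot] (hl : l ≤ 𝓝[≠] 0) :
    ∀ {N : ℕ} {c : ℕ → E}, (fun x => ∑ n ∈ range N, x ^ n • c n) =O[l] (fun x => x ^ N) →
      ∀ n < N, c n = 0
  | 0, _, _ => by simp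
  | N + 1, c, h => by
    have hl₀ : l ≤ 𝓝 0 := hl.trans nhdsWithin_le_nhds
    have hc₀ : c 0 = 0 := by
      have hpoly : Tendsto (fun x => ∑ n ∈ range (N + 1), x ^ n • c n) l (𝓝 (c 0)) := by
        have := ((continuous_finsetSum (range (N + 1)) fun n _ =>
          (continuous_pow n).smul (continuous_const (y := c n))).tendsto (0 : 𝕜)).mono_left hl₀
        simpa [Finset.sum_range_succ'] using this
      refine tendsto_nhds_unique hpoly (h.trans_tendsto ?_)
      simpa using ((continuous_pow (N + 1)).tendsto (0 : 𝕜)).mono_left hl₀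
    -- with the constant term gone, dividing by `x` lowers both degrees by one
    have hshift : (fun x => ∑ n ∈ range N, x ^ n • c (n + 1)) =O[l] (fun x => x ^ N) := by
      have hx : ∀ᶠ x in l, x ≠ 0 := hl self_mem_nhdsWithin
      refine ((isBigO_refl (fun x : 𝕜 => x⁻¹) l).smul h).congr' ?_ ?_ <;>
        filter_upwards [hx] with x hx
      · simp only [Finset.sum_range_succ', hc₀, smul_zero, add_zero, pow_succ', mul_smul,
          ← Finset.smul_sum, inv_smul_smul₀ hx]
      · simp only [smul_eq_mul, pow_succ', inv_mul_cancel_left₀ hx]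
    rintro (_ | n) hn
    · exact hc₀
    · exact eq_zero_of_sum_pow_smul_isBigO hl hshift n (by omega)

theorem HasFPowerSeriesAt.coeff_eq_of_eventually_eq_sum_add_pow_smul {𝕜 E : Type*}
    [NontriviallyNormedField 𝕜] [NormedAddCommGroup E] [NormedSpace 𝕜 E]
    {l : Filter 𝕜} [l.NeBot] (hl : l ≤ 𝓝[≠] 0) {f g : 𝕜 → E}
    {p : FormalMultilinearSeries 𝕜 𝕜 E} (hf : HasFPowerSeriesAt f p 0) {N : ℕ} {a : ℕ → E}
    (hg : g =O[l] (fun _ => (1 : ℝ)))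
    (hfg : ∀ᶠ x in l, f x = ∑ n ∈ range N, x ^ n • a n + x ^ N • g x) :
    ∀ n < N, p.coeff n = a n := by
  have htaylor : (fun x => f x - p.partialSum N x) =O[l] (fun x => x ^ N) := by
    have := (hf.isBigO_sub_partialSum_pow N).mono (hl.trans nhdsWithin_le_nhds)
    simpa only [zero_add, ← norm_pow, isBigO_norm_right] using this
  have hrem : (fun x => x ^ N • g x) =O[l] (fun x => x ^ N) := by
    simpa using (isBigO_refl (fun x : 𝕜 => x ^ N) l).smul
      (hg.trans (isBigO_const_const (1 : ℝ) (one_ne_zero (α := 𝕜)) l))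
  have hdiff : (fun x => ∑ n ∈ range N, x ^ n • (p.coeff n - a n)) =O[l] (fun x => x ^ N) := by
    refine (hrem.sub htaylor).congr' ?_ .rfl
    filter_upwards [hfg] with x hx
    simp only [hx, FormalMultilinearSeries.partialSum,
      FormalMultilinearSeries.apply_eq_pow_smul_coeff, smul_sub, Finset.sum_sub_distrib]
    abel
  intro n hn
  exact sub_eq_zero.1 (eq_zero_of_sum_pow_smul_isBigO hl hdiff n hn)

theorem isBigO_one_sum_range_mul_rpow_div {R : ℝ} {a : ℕ → ℂ} {k : ℕ} :
    (fun ε : ℝ => ∑ n ∈ range k,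
      a n * ((R ^ ((n : ℝ) - k + ε) : ℝ) : ℂ) / ((n : ℂ) - (k : ℂ) + (ε : ℂ)))
      =O[𝓝 0] (fun _ => (1 : ℝ)) := by
  refine Tendsto.isBigO_one ℝ (c := ∑ n ∈ range k,
    a n * ((R ^ ((n : ℝ) - k + 0) : ℝ) : ℂ) / ((n : ℂ) - (k : ℂ) + ((0 : ℝ) : ℂ))) ?_
  refine tendsto_finsetSum _ fun n hn => ?_
  have hnk : (n : ℝ) - k + 0 ≠ 0 := by
    simpa [sub_eq_zero] using (mem_range.1 hn).ne
  have hpow : ContinuousAt (fun ε : ℝ => R ^ ((n : ℝ) - k + ε)) 0 :=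
    (Real.continuousAt_const_rpow' hnk).comp (f := fun ε : ℝ => (n : ℝ) - k + ε) (by fun_prop)
  refine (tendsto_const_nhds.mul hpow.tendsto.ofReal).div
    ((continuous_const.add continuous_ofReal).tendsto 0) ?_
  exact_mod_cast hnk

theorem tendsto_mul_rpow_div_self {R : ℝ} (hR : R ≠ 0) (c : ℂ) (k : ℕ) :
    Tendsto (fun ε : ℝ =>
      (ε : ℂ) * (c * ((R ^ ((k : ℝ) - k + ε) : ℝ) : ℂ) / ((k : ℂ) - (k : ℂ) + (ε : ℂ))))
      (𝓝[≠] 0) (𝓝 c) := by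
  have hcont : Tendsto (fun ε : ℝ => c * ((R ^ ε : ℝ) : ℂ)) (𝓝[≠] 0) (𝓝 c) := by
    have := ((continuous_ofReal.continuousAt.comp (Real.continuousAt_const_rpow hR)).const_mul c
      ).tendsto.mono_left (nhdsWithin_le_nhds (a := (0 : ℝ)) (s := {0}ᶜ))
    simpa using this
  refine hcont.congr' ?_
  filter_upwards [self_mem_nhdsWithin] with ε hε
  rw [sub_self, sub_self, zero_add, zero_add, mul_div_cancel₀ _ (ofReal_ne_zero.2 hε)]

/-- Lemma 1.4(A): for `φ` analytic on `[0,∞)` with `∫_R^∞ p^{Re α - 1}|φ(p)| dp < ∞`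
for all `R > 0` and all `α`, and for each `k = 0,1,2,...`,
`lim_{ε→0} ε · FP∫₀^∞ p^{-k-1+ε} φ(p) dp = φ^{(k)}(0)/k!`.
The Hadamard finite part is expressed via the decomposition
`φ(p) = Σ_{n≤k} a n p^n + p^{k+1} ψ(p)`: it replaces each divergent
`∫₀^R p^{n-k-1+ε} dp` by `R^{n-k+ε}/(n-k+ε)`. -/
theorem hadamard_finite_part_limit (φ ψ : ℝ → ℂ) (k : ℕ) (a : ℕ → ℂ) (R : ℝ) (hR : 0 < R)
    (hφ : AnalyticOnNhd ℝ φ (Set.Ici 0)) (hψ : AnalyticOnNhd ℝ ψ (Set.Ici 0))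
    (hdecomp : ∀ p : ℝ, 0 ≤ p →
      φ p = (∑ n ∈ Finset.range (k + 1), a n * (p : ℂ) ^ n) + (p : ℂ) ^ (k + 1) * ψ p)
    (hint : ∀ S : ℝ, 0 < S → ∀ α : ℝ,
      IntegrableOn (fun p : ℝ => p ^ (α - 1) * ‖φ p‖) (Set.Ioi S)) :
    Tendsto
      (fun ε : ℝ =>
        (ε : ℂ) *
          ((∑ n ∈ Finset.range (k + 1),
              a n * ((R ^ ((n : ℝ) - k + ε) : ℝ) : ℂ) / ((n : ℂ) - (k : ℂ) + (ε : ℂ)))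
            + (∫ p in (0 : ℝ)..R, ((p ^ ε : ℝ) : ℂ) * ψ p)
            + ∫ p in Set.Ioi R, ((p ^ (-(k : ℝ) - 1 + ε) : ℝ) : ℂ) * φ p))
      (nhdsWithin 0 {(0 : ℝ)}ᶜ)
      (nhds (iteratedDeriv k φ 0 / (Nat.factorial k : ℂ))) := by
  obtain ⟨ps, hps⟩ := hφ 0 self_mem_Ici
  have hcoeff : ps.coeff k = a k := by
    refine hps.coeff_eq_of_eventually_eq_sum_add_pow_smul (l := 𝓝[>] 0)
      (nhdsWithin_mono _ fun _ hp => ne_of_gt hp)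
      ((hψ 0 self_mem_Ici).continuousAt.tendsto.isBigO_one ℝ |>.mono nhdsWithin_le_nhds)
      (eventually_nhdsWithin_of_forall fun p hp => ?_) k k.lt_add_one
    simpa [Complex.real_smul, mul_comm] using hdecomp p (le_of_lt hp)
  rw [hps.iteratedDeriv_eq_factorial_smul_coeff, hcoeff, nsmul_eq_mul,
    mul_div_cancel_left₀ _ (Nat.cast_ne_zero.2 k.factorial_ne_zero)]
  have hbounded : (fun ε : ℝ => ∑ n ∈ range k,
      a n * ((R ^ ((n : ℝ) - k + ε) : ℝ) : ℂ) / ((n : ℂ) - (k : ℂ) + (ε : ℂ))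
      + (∫ p in (0 : ℝ)..R, ((p ^ ε : ℝ) : ℂ) * ψ p)
      + ∫ p in Ioi R, ((p ^ (-(k : ℝ) - 1 + ε) : ℝ) : ℂ) * φ p) =O[𝓝 0] (fun _ => (1 : ℝ)) := by
    simpa only [Complex.real_smul] using (isBigO_one_sum_range_mul_rpow_div.add
      (isBigO_one_intervalIntegral_rpow_smul hR.le fun p hp =>
        (hψ p hp.1).continuousAt.continuousWithinAt)).add
      (isBigO_one_setIntegral_Ioi_rpow_add_smul hR (hint R hR) _)
  have hεbounded := (continuous_ofReal.tendsto' 0 0 ofReal_zero).zero_mul_isBoundedUnder_le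
    ((isBigO_one_iff ℝ).1 hbounded)
  refine (zero_add (a k) ▸ (hεbounded.mono_left nhdsWithin_le_nhds).add
    (tendsto_mul_rpow_div_self hR.ne' (a k) k)).congr fun ε => ?_
  rw [Finset.sum_range_succ]
  ring
end

section
/- For a ∈ ℂ with Re a > -1/2 and Re y > 0, as y → +∞ along the positive real axis, e^{y/4} y^{1/4 + a/2} u_-(a,y) → 1, where u_-(a,y) = (1/Γ(1/4 + a/2)) e^{-y/4} ∫₀^∞ e^{-py} p^{a/2 - 3/4}(1+2p)^{-a/2-3/4} dp. -/
open Complex Filter MeasureTheory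

/-- The Laplace-integral solution `u₋(a,y)`. -/
noncomputable def uminus (a y : ℂ) : ℂ :=
  (Complex.Gamma (1 / 4 + a / 2))⁻¹ * Complex.exp (-y / 4) *
    ∫ p in Set.Ioi (0 : ℝ),
      Complex.exp (-(p : ℂ) * y) * (p : ℂ) ^ (a / 2 - 3 / 4) *
        (1 + 2 * (p : ℂ)) ^ (-a / 2 - 3 / 4)

/-!
Watson's lemma at leading order. The substitution `p = x / t` gives
`t ^ s * ∫₀^∞ e^{-pt} p^{s-1} g p dp = ∫₀^∞ e^{-x} x^{s-1} g (x / t) dx`, and for bounded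
`g` with `g → L` at `0⁺` dominated convergence sends the right side to `Γ(s) L` as `t → ∞`.
For `u₋` take `s = 1/4 + a/2` and `g p = (1 + 2p)^{-a/2-3/4}`, which has modulus at most `1`
because `Re (-a/2 - 3/4) < 0`, and tends to `1`.
-/

open Set Topology

theorem cpow_mul_integral_exp_mul_cpow_eq {t : ℝ} (ht : 0 < t) (s : ℂ) (g : ℝ → ℂ) :
    (t : ℂ) ^ s * ∫ p in Ioi (0 : ℝ), exp (-(p : ℂ) * t) * (p : ℂ) ^ (s - 1) * g p =
      ∫ x in Ioi (0 : ℝ), exp (-(x : ℂ)) * (x : ℂ) ^ (s - 1) * g (x / t) := by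
  have ht0 : (t : ℂ) ≠ 0 := ofReal_ne_zero.2 ht.ne'
  have hsubst := integral_comp_mul_left_Ioi'
    (fun x : ℝ => exp (-(x : ℂ)) * (x : ℂ) ^ (s - 1) * g (x / t)) 0 ht
  rw [mul_zero] at hsubst
  rw [← hsubst, real_smul, ← integral_const_mul, ← integral_const_mul]
  refine setIntegral_congr_fun measurableSet_Ioi fun p hp => ?_
  have hscale : ((t : ℂ) * p) ^ (s - 1) = (t : ℂ) ^ (s - 1) * (p : ℂ) ^ (s - 1) :=
    mul_cpow_ofReal_nonneg ht.le (le_of_lt hp) (s - 1)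
  push_cast
  simp only [hscale, mul_div_cancel_left₀ p ht.ne', cpow_sub _ _ ht0, cpow_one]
  field_simp

theorem tendsto_cpow_mul_integral_exp_mul_cpow {s : ℂ} (hs : 0 < s.re) {g : ℝ → ℂ} {L : ℂ}
    {C : ℝ} (hg : Measurable g) (hgC : ∀ p, 0 < p → ‖g p‖ ≤ C)
    (hgL : Tendsto g (𝓝[>] 0) (𝓝 L)) :
    Tendsto (fun t : ℝ => (t : ℂ) ^ s *
        ∫ p in Ioi (0 : ℝ), exp (-(p : ℂ) * t) * (p : ℂ) ^ (s - 1) * g p)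
      atTop (𝓝 (Gamma s * L)) := by
  have hlim : Tendsto (fun t : ℝ =>
      ∫ x in Ioi (0 : ℝ), exp (-(x : ℂ)) * (x : ℂ) ^ (s - 1) * g (x / t))
      atTop (𝓝 (∫ x in Ioi (0 : ℝ), exp (-(x : ℂ)) * (x : ℂ) ^ (s - 1) * L)) := by
    refine tendsto_integral_filter_of_dominated_convergence
      (fun x : ℝ => C * (Real.exp (-x) * x ^ (s.re - 1))) ?_ ?_ ?_ ?_
    · refine Eventually.of_forall fun t => ?_
      have hgt : Measurable fun x : ℝ => g (x / t) := hg.comp (measurable_id.div_const t)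
      exact (by fun_prop : Measurable fun x : ℝ => exp (-(x : ℂ)) * (x : ℂ) ^ (s - 1))
        |>.mul hgt |>.aestronglyMeasurable
    · filter_upwards [eventually_gt_atTop (0 : ℝ)] with t ht
      refine (ae_restrict_iff' measurableSet_Ioi).2 (Eventually.of_forall fun x hx => ?_)
      rw [norm_mul, norm_mul, norm_exp, neg_re, ofReal_re, norm_cpow_eq_rpow_re_of_pos hx,
        sub_re, one_re, mul_comm C]
      exact mul_le_mul_of_nonneg_left (hgC _ (div_pos hx ht))
        (mul_nonneg (Real.exp_pos _).le (Real.rpow_nonneg (le_of_lt hx) _))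
    · exact ((Real.GammaIntegral_convergent hs).const_mul C)
    · refine (ae_restrict_iff' measurableSet_Ioi).2 (Eventually.of_forall fun x hx => ?_)
      have hdiv : Tendsto (fun t : ℝ => x / t) atTop (𝓝[>] 0) :=
        tendsto_nhdsWithin_of_tendsto_nhds_of_eventually_within _
          (tendsto_const_nhds.div_atTop tendsto_id)
          ((eventually_gt_atTop 0).mono fun t ht => div_pos hx ht)
      exact tendsto_const_nhds.mul (hgL.comp hdiv)
  have hGamma :
      (∫ x in Ioi (0 : ℝ), exp (-(x : ℂ)) * (x : ℂ) ^ (s - 1) * L) = Gamma s * L := by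
    rw [integral_mul_const, Gamma_eq_integral hs, GammaIntegral]
    simp only [ofReal_exp, ofReal_neg]
  rw [← hGamma]
  refine hlim.congr' ?_
  filter_upwards [eventually_gt_atTop (0 : ℝ)] with t ht
  exact (cpow_mul_integral_exp_mul_cpow_eq ht s g).symm

theorem norm_one_add_ofReal_cpow_le_one {x : ℝ} (hx : 0 ≤ x) {d : ℂ} (hd : d.re ≤ 0) :
    ‖(1 + (x : ℂ)) ^ d‖ ≤ 1 := by
  rw [← ofReal_one, ← ofReal_add, norm_cpow_eq_rpow_re_of_pos (by linarith)]
  exact Real.rpow_le_one_of_one_le_of_nonpos (by linarith) hd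

/-- Watson's lemma, leading order: for `Re a > -1/2`, as `y → +∞` along the positive
real axis, `e^{y/4} y^{1/4 + a/2} u₋(a,y) → 1`. -/
theorem uminus_asymptotics (a : ℂ) (ha : (-1 : ℝ) / 2 < a.re) :
    Tendsto
      (fun t : ℝ =>
        Complex.exp ((t : ℂ) / 4) * (t : ℂ) ^ ((1 : ℂ) / 4 + a / 2) * uminus a (t : ℂ))
      atTop (nhds 1) := by
  set s : ℂ := 1 / 4 + a / 2 with hs_def
  have hs : 0 < s.re := by simp only [hs_def, add_re, div_ofNat_re, one_re]; linarith
  have hd : (-a / 2 - 3 / 4).re ≤ 0 := by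
    simp only [sub_re, div_ofNat_re, neg_re, re_ofNat]; linarith
  have hcont : ContinuousAt (fun p : ℝ => (1 + 2 * (p : ℂ)) ^ (-a / 2 - 3 / 4)) 0 :=
    (continuousAt_cpow_const (by simp)).comp (by fun_prop)
  have hW := tendsto_cpow_mul_integral_exp_mul_cpow hs
    (g := fun p : ℝ => (1 + 2 * (p : ℂ)) ^ (-a / 2 - 3 / 4)) (by fun_prop)
    (fun p hp => by
      simpa using norm_one_add_ofReal_cpow_le_one (by positivity : (0 : ℝ) ≤ 2 * p) hd)
    (by simpa using hcont.tendsto.mono_left nhdsWithin_le_nhds)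
  rw [show s - 1 = a / 2 - 3 / 4 by ring, mul_one] at hW
  convert hW.const_mul (Gamma s)⁻¹ using 1
  · ext t
    rw [uminus, ← hs_def]
    have hexp : exp ((t : ℂ) / 4) * exp (-(t : ℂ) / 4) = 1 := by
      rw [← exp_add, show (t : ℂ) / 4 + -(t : ℂ) / 4 = 0 by ring, exp_zero]
    linear_combination ((Gamma s)⁻¹ * (t : ℂ) ^ s *
      ∫ p in Ioi (0 : ℝ), exp (-(p : ℂ) * t) * (p : ℂ) ^ (a / 2 - 3 / 4) *
        (1 + 2 * (p : ℂ)) ^ (-a / 2 - 3 / 4)) * hexp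
  · rw [inv_mul_cancel₀ (Gamma_ne_zero_of_re_pos hs)]
end

section
/- For all a ∈ ℂ (avoiding poles), ((1 + i e^{πa}) · 2^{ia} · e^{-iπ/4} · Γ(1/4 + ia/2)) / Γ(1/4 - ia/2) = √(2π) e^{πa/2} / Γ(1/2 - ia). -/
/-!
Put `z = 1/4 + ia/2`, so that `1/2 - z = 1/4 - ia/2` and `1 - 2z = 1/2 - ia`. The reflection formula
at `z` and the duplication formula at `1/2 - z` share the factor `Γ(1 - z)`; dividing one by the
other expresses `Γ(z) / Γ(1/2 - z)` through `√π`, `2^{2z}`, `sin(πz)` and `Γ(1 - 2z)`. What remains is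
the elementary identity `(1 + i e^{πa}) e^{-iπ/4} = 2 e^{πa/2} sin(πz)`.
-/

open Complex Real

namespace Complex

theorem sin_pi_mul_ne_zero_of_Gamma_ne_zero {z : ℂ} (hz : Gamma z ≠ 0)
    (hz' : Gamma (1 - z) ≠ 0) : sin (π * z) ≠ 0 := by
  intro h
  have hrefl := Gamma_mul_Gamma_one_sub z
  rw [h, div_zero] at hrefl
  exact mul_ne_zero hz hz' hrefl

theorem Gamma_div_Gamma_one_half_sub {z : ℂ} (hz : Gamma (1 - z) ≠ 0) :
    Gamma z / Gamma (1 / 2 - z) =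
      √π / ((2 : ℂ) ^ (2 * z) * sin (π * z) * Gamma (1 - 2 * z)) := by
  have hdup := Gamma_mul_Gamma_add_half (1 / 2 - z)
  rw [show 1 - 2 * (1 / 2 - z) = 2 * z by ring, show 1 / 2 - z + 1 / 2 = 1 - z by ring,
    show 2 * (1 / 2 - z) = 1 - 2 * z by ring] at hdup
  have hpi : (π : ℂ) = √π * √π := by
    rw [← ofReal_mul, mul_self_sqrt pi_pos.le]
  calc Gamma z / Gamma (1 / 2 - z)
      = Gamma z * Gamma (1 - z) / (Gamma (1 / 2 - z) * Gamma (1 - z)) :=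
        (mul_div_mul_right _ _ hz).symm
    _ = √π * √π / sin (π * z) / (Gamma (1 - 2 * z) * 2 ^ (2 * z) * √π) := by
        rw [Gamma_mul_Gamma_one_sub, hdup, hpi]
    _ = √π / ((2 : ℂ) ^ (2 * z) * sin (π * z) * Gamma (1 - 2 * z)) := by
        field_simp

theorem ofReal_cpow_one_half_add {x : ℝ} (hx : 0 < x) (s : ℂ) :
    (x : ℂ) ^ (1 / 2 + s) = √x * (x : ℂ) ^ s := by
  rw [cpow_add _ _ (ofReal_ne_zero.mpr hx.ne'), sqrt_eq_rpow, ofReal_cpow hx.le]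
  norm_num

theorem one_add_I_mul_exp_mul_exp_neg_I_pi_div_four (a : ℂ) :
    (1 + I * exp (π * a)) * exp (-I * π / 4) =
      2 * exp (π * a / 2) * sin (π * (1 / 4 + I * a / 2)) := by
  set q := exp (I * π / 4)
  set E := exp (π * a / 2)
  have hq : q * q = I := by
    rw [← exp_add]; convert exp_pi_div_two_mul_I using 2; ring
  have hq0 : q ≠ 0 := exp_ne_zero _
  have hE0 : E ≠ 0 := exp_ne_zero _
  have h1 : exp (π * a) = E * E := by rw [← exp_add]; ring_nf
  have h2 : exp (-I * π / 4) = q⁻¹ := by rw [← exp_neg]; ring_nf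
  have h3 : exp (-(π * (1 / 4 + I * a / 2)) * I) = q⁻¹ * E := by
    rw [← exp_neg, ← exp_add]; congr 1; linear_combination (-π * a / 2) * I_sq
  have h4 : exp (π * (1 / 4 + I * a / 2) * I) = q * E⁻¹ := by
    rw [← exp_neg, ← exp_add]; congr 1; linear_combination (π * a / 2) * I_sq
  rw [sin, h1, h2, h3, h4]
  field_simp
  linear_combination I * hq + I_sq

end Complex

theorem connection_coefficient_identity_E_general (a : ℂ)
    (h1 : ∀ n : ℕ, 1 / 4 + Complex.I * a / 2 ≠ -(n : ℂ))
    (h3 : ∀ n : ℕ, 1 / 2 - Complex.I * a ≠ -(n : ℂ)) :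
    ((1 + Complex.I * Complex.exp ((Real.pi : ℂ) * a)) * (2 : ℂ) ^ (Complex.I * a) *
          Complex.exp (-Complex.I * (Real.pi : ℂ) / 4) *
          Complex.Gamma (1 / 4 + Complex.I * a / 2)) /
        Complex.Gamma (1 / 4 - Complex.I * a / 2)
      = ((Real.sqrt (2 * Real.pi) : ℝ) : ℂ) * Complex.exp ((Real.pi : ℂ) * a / 2) /
          Complex.Gamma (1 / 2 - Complex.I * a) := by
  -- `2 (1 - z) = (1/2 - ia) + 1`, so a pole of `Γ(1 - z)` would give one of `Γ(1/2 - ia)`.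
  have hΓ : Gamma (1 - (1 / 4 + I * a / 2)) ≠ 0 :=
    Gamma_ne_zero fun n hn => h3 (2 * n + 1) (by push_cast; linear_combination 2 * hn)
  have hsin := sin_pi_mul_ne_zero_of_Gamma_ne_zero (Gamma_ne_zero h1) hΓ
  have hquot := Gamma_div_Gamma_one_half_sub hΓ
  rw [show 1 / 2 - (1 / 4 + I * a / 2) = 1 / 4 - I * a / 2 by ring,
    show 1 - 2 * (1 / 4 + I * a / 2) = 1 / 2 - I * a by ring,
    show 2 * (1 / 4 + I * a / 2) = 1 / 2 + I * a by ring] at hquot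
  have hpow : (2 : ℂ) ^ (1 / 2 + I * a) = √2 * 2 ^ (I * a) := by
    exact_mod_cast ofReal_cpow_one_half_add two_pos (I * a)
  have hsqrt : ((√(2 * π) : ℝ) : ℂ) = √2 * √π := by
    rw [sqrt_mul zero_le_two, ofReal_mul]
  have hsqrt2 : ((√2 : ℝ) : ℂ) * √2 = 2 := by
    rw [← ofReal_mul, mul_self_sqrt zero_le_two, ofReal_ofNat]
  calc _ = (1 + I * exp (π * a)) * exp (-I * π / 4) * 2 ^ (I * a) *
        (Gamma (1 / 4 + I * a / 2) / Gamma (1 / 4 - I * a / 2)) := by ring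
    _ = _ := by
      rw [hquot, one_add_I_mul_exp_mul_exp_neg_I_pi_div_four, hpow, hsqrt]
      -- otherwise `field_simp` normalises the arguments of `sin` and `Gamma` apart from `hsin`
      generalize sin (π * (1 / 4 + I * a / 2)) = S at hsin ⊢
      generalize Gamma (1 / 2 - I * a) = G
      field_simp
      linear_combination -G⁻¹ * hsqrt2

/-- The Gamma-function identity giving the connection coefficient in
`E₋(a,-x) = i e^{πa} E₋(a,x) + (√(2π)/Γ(1/2 - ia)) e^{πa/2} E₊(a,x)`:
`((1 + i e^{πa}) 2^{ia} e^{-iπ/4} Γ(1/4 + ia/2)) / Γ(1/4 - ia/2)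
  = √(2π) e^{πa/2} / Γ(1/2 - ia)`, for `a` avoiding the poles of the Gamma factors. -/
theorem connection_coefficient_identity_E (a : ℂ)
    (h1 : ∀ n : ℕ, 1 / 4 + Complex.I * a / 2 ≠ -(n : ℂ))
    (h2 : ∀ n : ℕ, 1 / 4 - Complex.I * a / 2 ≠ -(n : ℂ))
    (h3 : ∀ n : ℕ, 1 / 2 - Complex.I * a ≠ -(n : ℂ)) :
    ((1 + Complex.I * Complex.exp ((Real.pi : ℂ) * a)) * (2 : ℂ) ^ (Complex.I * a) *
          Complex.exp (-Complex.I * (Real.pi : ℂ) / 4) *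
          Complex.Gamma (1 / 4 + Complex.I * a / 2)) /
        Complex.Gamma (1 / 4 - Complex.I * a / 2)
      = ((Real.sqrt (2 * Real.pi) : ℝ) : ℂ) * Complex.exp ((Real.pi : ℂ) * a / 2) /
          Complex.Gamma (1 / 2 - Complex.I * a) :=
  connection_coefficient_identity_E_general a h1 h3
end
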